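/- arXiv:1502.01806 — 6 statements merged into one kernel-verified Lean document; each statement's English description precedes it below -/
import Mathlib

section
/- Let S be a finite set with |S| = n ≥ 3 and let 2 ≤ r ≤ n−1. If C is a collection of r-element subsets of S such that any two distinct members X, Y ∈ C satisfy |X ∩ Y| ≤ r−2, then the collection B = (all r-subsets of S) \ C is nonempty and satisfies the basis exchange axiom: for all B₁, B₂ ∈ B and x ∈ B₁ \ B₂ there exists y ∈ B₂ \ B₁ with (B₁ \ {x}) ∪ {y} ∈ B. Hence B is the set of bases of a matroid of rank r on S. -/
/-!
Two distinct `r`-sets sharing an `(r-1)`-set `D` meet in at least `r - 1 > r - 2` elements, so at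
most one set of the form `insert y D` lies in `C`. Hence whenever an `(r-1)`-set can be extended in
two ways to an `r`-set, one of the extensions avoids `C`. For the exchange axiom take
`D = B₁.erase x`: if `insert y D ∈ C` for some `y ∈ B₂ \ B₁`, then `insert y D ≠ B₂`, and an element
of `B₂` outside `insert y D` provides the second extension.
-/

open Finset

section SparseFamily

variable {α : Type*} [DecidableEq α] {C : Finset (Finset α)} {r : ℕ}

theorem insert_notMem_of_insert_mem (hr : 2 ≤ r)
    (hC : ∀ X ∈ C, ∀ Y ∈ C, X ≠ Y → (X ∩ Y).card ≤ r - 2)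
    {D : Finset α} (hD : D.card + 1 = r) {y z : α} (hy : insert y D ∈ C) (hz : z ∉ insert y D) :
    insert z D ∉ C := by
  intro hzC
  have hne : insert y D ≠ insert z D := fun h => hz (h ▸ mem_insert_self z D)
  have hD_sub : D ⊆ insert y D ∩ insert z D :=
    subset_inter (subset_insert y D) (subset_insert z D)
  have := card_le_card hD_sub
  have := hC _ hy _ hzC hne
  omega

theorem card_insert_erase_of_notMem {B : Finset α} {x y : α} (hx : x ∈ B) (hy : y ∉ B.erase x) :
    (insert y (B.erase x)).card = B.card := by
  rw [card_insert_of_notMem hy, card_erase_add_one hx]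

variable [Fintype α]

theorem powersetCard_univ_sdiff_nonempty (hr : 2 ≤ r) (hrα : r < Fintype.card α)
    (hC : ∀ X ∈ C, ∀ Y ∈ C, X ≠ Y → (X ∩ Y).card ≤ r - 2) :
    ((univ : Finset α).powersetCard r \ C).Nonempty := by
  obtain ⟨X, hX⟩ := powersetCard_nonempty.2 (card_univ (α := α) ▸ hrα.le)
  by_cases hXC : X ∈ C
  swap
  · exact ⟨X, mem_sdiff.2 ⟨hX, hXC⟩⟩
  rw [mem_powersetCard_univ] at hX
  obtain ⟨x, hx⟩ : X.Nonempty := card_pos.1 (by omega)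
  obtain ⟨y, -, hy⟩ := exists_mem_notMem_of_card_lt_card (s := X) (t := univ)
    (by rwa [hX, card_univ])
  have hyD : y ∉ X.erase x := fun h => hy (mem_of_mem_erase h)
  refine ⟨insert y (X.erase x), mem_sdiff.2 ⟨?_, ?_⟩⟩
  · rw [mem_powersetCard_univ, card_insert_erase_of_notMem hx hyD, hX]
  · refine insert_notMem_of_insert_mem (y := x) hr hC (by rw [card_erase_add_one hx, hX]) ?_ ?_ <;>
      rwa [insert_erase hx]

theorem exists_insert_erase_mem_powersetCard_univ_sdiff (hr : 2 ≤ r)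
    (hC : ∀ X ∈ C, ∀ Y ∈ C, X ≠ Y → (X ∩ Y).card ≤ r - 2) {B₁ B₂ : Finset α}
    (hB₁ : B₁ ∈ (univ : Finset α).powersetCard r \ C)
    (hB₂ : B₂ ∈ (univ : Finset α).powersetCard r \ C) {x : α} (hx : x ∈ B₁ \ B₂) :
    ∃ y ∈ B₂ \ B₁, insert y (B₁.erase x) ∈ (univ : Finset α).powersetCard r \ C := by
  simp only [mem_sdiff, mem_powersetCard_univ] at hB₁ hB₂ hx
  obtain ⟨hB₁r, -⟩ := hB₁
  obtain ⟨hB₂r, hB₂C⟩ := hB₂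
  set D := B₁.erase x
  have hD : D.card + 1 = r := by rw [card_erase_add_one hx.1, hB₁r]
  have notMem_B₁ : ∀ y ∈ B₂, y ∉ D → y ∉ B₁ := fun y hy hyD hyB₁ =>
    hyD (mem_erase.2 ⟨ne_of_mem_of_not_mem hy hx.2, hyB₁⟩)
  have extend : ∀ y ∈ B₂, y ∉ D → insert y D ∉ C →
      ∃ y ∈ B₂ \ B₁, insert y D ∈ (univ : Finset α).powersetCard r \ C := fun y hy hyD hyC =>
    ⟨y, mem_sdiff.2 ⟨hy, notMem_B₁ y hy hyD⟩,
      mem_sdiff.2 ⟨mem_powersetCard_univ.2 (by rw [card_insert_of_notMem hyD, hD]), hyC⟩⟩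
  obtain ⟨y, hy, hyD⟩ := exists_mem_notMem_of_card_lt_card (s := D) (t := B₂) (by omega)
  by_cases hyC : insert y D ∈ C
  swap
  · exact extend y hy hyD hyC
  have hB₂_not_sub : ¬B₂ ⊆ insert y D := fun h =>
    hB₂C (eq_of_subset_of_card_le h (by rw [card_insert_of_notMem hyD, hD, hB₂r]) ▸ hyC)
  obtain ⟨z, hz, hzy⟩ := not_subset.1 hB₂_not_sub
  exact extend z hz (fun h => hzy (mem_insert_of_mem h))
    (insert_notMem_of_insert_mem hr hC hD hyC hzy)

end SparseFamily

theorem Matroid.exists_isBase_iff_of_exchange {α : Type*} [DecidableEq α] [Finite α]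
    (𝓑 : Finset (Finset α)) (h𝓑 : 𝓑.Nonempty)
    (hexch : ∀ B₁ ∈ 𝓑, ∀ B₂ ∈ 𝓑, ∀ x ∈ B₁ \ B₂, ∃ y ∈ B₂ \ B₁, insert y (B₁.erase x) ∈ 𝓑) :
    ∃ M : Matroid α, M.E = Set.univ ∧ ∀ B : Set α, M.IsBase B ↔ ∃ b ∈ 𝓑, B = ↑b := by
  let IsBase : Set α → Prop := fun B => ∃ b ∈ 𝓑, B = ↑b
  have exists_isBase : ∃ B, IsBase B := by
    obtain ⟨b, hb⟩ := h𝓑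
    exact ⟨b, b, hb, rfl⟩
  have isBase_exchange : Matroid.ExchangeProperty IsBase := by
    rintro _ _ ⟨b₁, hb₁, rfl⟩ ⟨b₂, hb₂, rfl⟩ x hx
    obtain ⟨y, hy, hmem⟩ := hexch b₁ hb₁ b₂ hb₂ x (by simpa using hx)
    exact ⟨y, by simpa using hy, _, hmem, by simp⟩
  exact ⟨Matroid.ofIsBaseOfFinite Set.finite_univ IsBase exists_isBase isBase_exchange
    (fun B _ => Set.subset_univ B), rfl, fun B => Iff.rfl⟩

theorem stmt0_general (n r : ℕ) (hr2 : 2 ≤ r) (hrn : r ≤ n - 1)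
    (C : Finset (Finset (Fin n)))
    (hCap : ∀ X ∈ C, ∀ Y ∈ C, X ≠ Y → (X ∩ Y).card ≤ r - 2) :
    (((Finset.univ : Finset (Fin n)).powersetCard r) \ C).Nonempty ∧
    (∀ B₁ ∈ ((Finset.univ : Finset (Fin n)).powersetCard r) \ C,
      ∀ B₂ ∈ ((Finset.univ : Finset (Fin n)).powersetCard r) \ C,
      ∀ x ∈ B₁ \ B₂, ∃ y ∈ B₂ \ B₁,
        insert y (B₁.erase x) ∈ ((Finset.univ : Finset (Fin n)).powersetCard r) \ C) ∧
    (∃ M : Matroid (Fin n), M.E = Set.univ ∧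
      (∀ B : Set (Fin n), M.IsBase B ↔
        ∃ b ∈ ((Finset.univ : Finset (Fin n)).powersetCard r) \ C, B = ↑b) ∧
      (∀ B : Set (Fin n), M.IsBase B → B.ncard = r)) := by
  have hne := powersetCard_univ_sdiff_nonempty hr2 (by rw [Fintype.card_fin]; omega) hCap
  have hexch := fun B₁ (hB₁ : B₁ ∈ univ.powersetCard r \ C) B₂ (hB₂ : B₂ ∈ univ.powersetCard r \ C)
    x (hx : x ∈ B₁ \ B₂) => exists_insert_erase_mem_powersetCard_univ_sdiff hr2 hCap hB₁ hB₂ hx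
  obtain ⟨M, hME, hM⟩ := Matroid.exists_isBase_iff_of_exchange _ hne hexch
  refine ⟨hne, hexch, M, hME, hM, fun B hB => ?_⟩
  obtain ⟨b, hb, rfl⟩ := (hM B).1 hB
  rw [Set.ncard_coe_finset, mem_powersetCard_univ.1 (mem_sdiff.1 hb).1]

/-- If `C` is a family of `r`-subsets of a set of size `n ≥ 3`
(`2 ≤ r ≤ n-1`) with pairwise intersections of size at most `r-2`, then
`B = (all r-subsets) \ C` is nonempty, satisfies the basis exchange axiom,
and is the set of bases of a matroid of rank `r`. -/
theorem stmt0 (n r : ℕ) (hn : 3 ≤ n) (hr2 : 2 ≤ r) (hrn : r ≤ n - 1)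
    (C : Finset (Finset (Fin n))) (hCr : ∀ X ∈ C, X.card = r)
    (hCap : ∀ X ∈ C, ∀ Y ∈ C, X ≠ Y → (X ∩ Y).card ≤ r - 2) :
    (((Finset.univ : Finset (Fin n)).powersetCard r) \ C).Nonempty ∧
    (∀ B₁ ∈ ((Finset.univ : Finset (Fin n)).powersetCard r) \ C,
      ∀ B₂ ∈ ((Finset.univ : Finset (Fin n)).powersetCard r) \ C,
      ∀ x ∈ B₁ \ B₂, ∃ y ∈ B₂ \ B₁,
        insert y (B₁.erase x) ∈ ((Finset.univ : Finset (Fin n)).powersetCard r) \ C) ∧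
    (∃ M : Matroid (Fin n), M.E = Set.univ ∧
      (∀ B : Set (Fin n), M.IsBase B ↔
        ∃ b ∈ ((Finset.univ : Finset (Fin n)).powersetCard r) \ C, B = ↑b) ∧
      (∀ B : Set (Fin n), M.IsBase B → B.ncard = r)) :=
  stmt0_general n r hr2 hrn C hCap
end

section
/- Let S be a finite set of cardinality n and 2 ≤ r ≤ n−1. If U is a family of r-subsets of S such that any two distinct members X, Y ∈ U satisfy |X ∩ Y| ≤ r−2, then |U| ≤ (1/(n−r))·C(n, r+1). -/
/-- If `U` is a family of `r`-subsets of an `n`-set with pairwise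
intersections of size at most `r-2` (`2 ≤ r ≤ n-1`), then
`|U| ≤ (1/(n-r)) · C(n, r+1)`. -/
theorem stmt3 (n r : ℕ) (hr2 : 2 ≤ r) (hrn : r ≤ n - 1)
    (U : Finset (Finset (Fin n))) (hUr : ∀ X ∈ U, X.card = r)
    (hUap : ∀ X ∈ U, ∀ Y ∈ U, X ≠ Y → (X ∩ Y).card ≤ r - 2) :
    (U.card : ℚ) ≤ (n.choose (r + 1) : ℚ) / ((n - r : ℕ) : ℚ) := by
  have hn3 : 3 ≤ n := by omega
  have hrltn : r < n := by omega
  set T : Finset (Finset (Fin n)) := Finset.powersetCard (r + 1) Finset.univ with hT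
  set f : Finset (Fin n) → Finset (Finset (Fin n)) :=
    fun X => T.filter (fun A => X ⊆ A) with hf
  -- each f X has card n - r
  have hcard : ∀ X ∈ U, (f X).card = n - r := by
    intro X hX
    have hXr : X.card = r := hUr X hX
    have himg : (Finset.univ \ X).image (fun a => insert a X) = f X := by
      ext A
      simp only [Finset.mem_image, hf, Finset.mem_filter, hT,
        Finset.mem_powersetCard, Finset.mem_sdiff, Finset.mem_univ, true_and]
      constructor
      · rintro ⟨a, ha, rfl⟩
        refine ⟨⟨Finset.subset_univ _, ?_⟩, Finset.subset_insert _ _⟩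
        rw [Finset.card_insert_of_notMem ha, hXr]
      · rintro ⟨⟨-, hAcard⟩, hXA⟩
        have h1 : (A \ X).card = 1 := by
          rw [Finset.card_sdiff_of_subset hXA, hAcard, hXr]; omega
        obtain ⟨a, ha⟩ := Finset.card_eq_one.mp h1
        have haA : a ∈ A \ X := ha ▸ Finset.mem_singleton_self a
        refine ⟨a, (Finset.mem_sdiff.mp haA).2, ?_⟩
        apply Finset.Subset.antisymm
        · intro x hx
          rcases Finset.mem_insert.mp hx with rfl | hx
          · exact (Finset.mem_sdiff.mp haA).1
          · exact hXA hx
        · intro x hx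
          by_cases hxX : x ∈ X
          · exact Finset.mem_insert_of_mem hxX
          · have : x ∈ A \ X := Finset.mem_sdiff.mpr ⟨hx, hxX⟩
            rw [ha, Finset.mem_singleton] at this
            exact this ▸ Finset.mem_insert_self _ _
    have hinj : Set.InjOn (fun a => insert a X) (Finset.univ \ X : Finset (Fin n)) := by
      intro a ha b hb hab
      have ha' : a ∉ X := (Finset.mem_sdiff.mp ha).2
      have hb' : b ∉ X := (Finset.mem_sdiff.mp hb).2
      simp only [] at hab
      have : a ∈ insert b X := hab ▸ Finset.mem_insert_self a X
      rcases Finset.mem_insert.mp this with h | h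
      · exact h
      · exact absurd h ha'
    rw [← himg, Finset.card_image_of_injOn hinj, Finset.card_sdiff_of_subset (Finset.subset_univ X),
      Finset.card_univ, Fintype.card_fin, hXr]
  -- disjointness
  have hdisj : ∀ X ∈ U, ∀ Y ∈ U, X ≠ Y → Disjoint (f X) (f Y) := by
    intro X hX Y hY hXY
    rw [Finset.disjoint_left]
    intro A hAX hAY
    simp only [hf, Finset.mem_filter, hT, Finset.mem_powersetCard] at hAX hAY
    obtain ⟨⟨-, hAcard⟩, hXA⟩ := hAX
    obtain ⟨-, hYA⟩ := hAY
    have hunion : X ∪ Y ⊆ A := Finset.union_subset hXA hYA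
    have h1 : (X ∪ Y).card ≤ r + 1 := hAcard ▸ Finset.card_le_card hunion
    have h2 : (X ∪ Y).card + (X ∩ Y).card = X.card + Y.card :=
      Finset.card_union_add_card_inter X Y
    have h3 := hUap X hX Y hY hXY
    rw [hUr X hX, hUr Y hY] at h2
    omega
  have hkey : (n - r) * U.card ≤ n.choose (r + 1) := by
    have hbU : (U.biUnion f).card = ∑ X ∈ U, (f X).card := Finset.card_biUnion hdisj
    have hsum : ∑ X ∈ U, (f X).card = (n - r) * U.card := by
      rw [Finset.sum_congr rfl hcard, Finset.sum_const, smul_eq_mul, mul_comm]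
    have hsub : U.biUnion f ⊆ T := by
      intro A hA
      obtain ⟨X, -, hAX⟩ := Finset.mem_biUnion.mp hA
      exact (Finset.mem_filter.mp hAX).1
    have hTcard : T.card = n.choose (r + 1) := by
      rw [hT, Finset.card_powersetCard, Finset.card_univ, Fintype.card_fin]
    calc (n - r) * U.card = (U.biUnion f).card := by rw [hbU, hsum]
      _ ≤ T.card := Finset.card_le_card hsub
      _ = n.choose (r + 1) := hTcard
  have hpos : (0 : ℚ) < ((n - r : ℕ) : ℚ) := by
    have : 0 < n - r := by omega
    exact_mod_cast this
  rw [le_div_iff₀ hpos]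
  calc (U.card : ℚ) * ((n - r : ℕ) : ℚ) = (((n - r) * U.card : ℕ) : ℚ) := by
        push_cast; ring
    _ ≤ (n.choose (r + 1) : ℚ) := by exact_mod_cast hkey
end

section
/- Let S be a finite set of cardinality n and 2 ≤ r ≤ n−1. Then there exists a family U of r-subsets of S, with any two distinct members intersecting in at most r−2 elements, such that |U| ≥ (1/(r(n−r)+1))·C(n,r). -/
/-- Neighborhood bound: the number of `r`-subsets meeting a fixed `r`-set `X`
in at least `r-1` elements is at most `r*(n-r)+1`. -/
lemma nbhd_bound (n r : ℕ) (X : Finset (Fin n)) (hX : X.card = r) :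
    ((Finset.powersetCard r (Finset.univ : Finset (Fin n))).filter
      (fun Y => r - 1 ≤ (X ∩ Y).card)).card ≤ r * (n - r) + 1 := by
  classical
  set N := (Finset.powersetCard r (Finset.univ : Finset (Fin n))).filter
      (fun Y => r - 1 ≤ (X ∩ Y).card) with hN
  have hsub : N ⊆ insert X ((X ×ˢ Xᶜ).image
      (fun p : Fin n × Fin n => insert p.2 (X.erase p.1))) := by
    intro Y hY
    rw [hN, Finset.mem_filter, Finset.mem_powersetCard] at hY
    obtain ⟨⟨-, hYcard⟩, hint⟩ := hY
    by_cases hXY : Y = X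
    · rw [hXY]; exact Finset.mem_insert_self _ _
    · refine Finset.mem_insert_of_mem ?_
      -- intersection has card exactly r - 1
      have hlt : (X ∩ Y).card < r := by
        rcases lt_or_eq_of_le (Finset.card_le_card (Finset.inter_subset_left) |>.trans_eq hX) with h | h
        · exact h
        · exfalso
          have : X ∩ Y = X := Finset.eq_of_subset_of_card_le Finset.inter_subset_left
            (by rw [h, hX])
          have hXsubY : X ⊆ Y := by
            intro x hx
            have := this ▸ hx
            exact (Finset.mem_inter.mp this).2
          exact hXY (Finset.eq_of_subset_of_card_le hXsubY (by rw [hX, hYcard])).symm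
      have hcard1 : (X \ Y).card = 1 := by
        have h1 : (X \ Y).card = X.card - (X ∩ Y).card := Finset.card_sdiff_add_card_inter X Y ▸ by omega
        omega
      have hcard2 : (Y \ X).card = 1 := by
        have h2 : (Y \ X).card = Y.card - (X ∩ Y).card := by
          rw [Finset.inter_comm]
          exact Finset.card_sdiff_add_card_inter Y X ▸ by omega
        omega
      obtain ⟨a, ha⟩ := Finset.card_eq_one.mp hcard1
      obtain ⟨b, hb⟩ := Finset.card_eq_one.mp hcard2
      have haX : a ∈ X ∧ a ∉ Y := by
        have : a ∈ X \ Y := ha ▸ Finset.mem_singleton_self a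
        exact Finset.mem_sdiff.mp this
      have hbY : b ∈ Y ∧ b ∉ X := by
        have : b ∈ Y \ X := hb ▸ Finset.mem_singleton_self b
        exact Finset.mem_sdiff.mp this
      refine Finset.mem_image.mpr ⟨(a, b), ?_, ?_⟩
      · exact Finset.mem_product.mpr ⟨haX.1, Finset.mem_compl.mpr hbY.2⟩
      · have e1 : ∀ x, (x ∈ X ∧ x ∉ Y) ↔ x = a := fun x => by
          rw [← Finset.mem_sdiff, ha, Finset.mem_singleton]
        have e2 : ∀ x, (x ∈ Y ∧ x ∉ X) ↔ x = b := fun x => by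
          rw [← Finset.mem_sdiff, hb, Finset.mem_singleton]
        ext x
        simp only [Finset.mem_insert, Finset.mem_erase]
        constructor
        · rintro (rfl | ⟨hxa, hxX⟩)
          · exact hbY.1
          · by_contra hxY
            exact hxa ((e1 x).mp ⟨hxX, hxY⟩)
        · intro hxY
          by_cases hxX : x ∈ X
          · right
            refine ⟨?_, hxX⟩
            intro hxa
            exact (hxa ▸ haX.2) hxY
          · left; exact (e2 x).mp ⟨hxY, hxX⟩
  calc N.card ≤ (insert X ((X ×ˢ Xᶜ).image
      (fun p : Fin n × Fin n => insert p.2 (X.erase p.1)))).card := Finset.card_le_card hsub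
    _ ≤ ((X ×ˢ Xᶜ).image (fun p : Fin n × Fin n => insert p.2 (X.erase p.1))).card + 1 :=
        Finset.card_insert_le _ _
    _ ≤ (X ×ˢ Xᶜ).card + 1 := by gcongr; exact Finset.card_image_le
    _ = r * (n - r) + 1 := by
        rw [Finset.card_product, Finset.card_compl, hX]
        simp

/-- There exists a family `U` of `r`-subsets of an `n`-set with
pairwise intersections of size at most `r-2` and
`|U| ≥ (1/(r(n-r)+1)) · C(n,r)`. -/
theorem stmt5 (n r : ℕ) (hr2 : 2 ≤ r) (hrn : r ≤ n - 1) :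
    ∃ U : Finset (Finset (Fin n)),
      (∀ X ∈ U, X.card = r) ∧
      (∀ X ∈ U, ∀ Y ∈ U, X ≠ Y → (X ∩ Y).card ≤ r - 2) ∧
      (n.choose r : ℚ) / ((r * (n - r) + 1 : ℕ) : ℚ) ≤ (U.card : ℚ) := by
  classical
  set A : Finset (Finset (Fin n)) := Finset.powersetCard r Finset.univ with hA
  have hAcard : A.card = n.choose r := by
    simp [hA, Finset.card_powersetCard]
  set S : Finset (Finset (Finset (Fin n))) :=
    A.powerset.filter (fun U => ∀ X ∈ U, ∀ Y ∈ U, X ≠ Y → (X ∩ Y).card ≤ r - 2) with hS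
  have hSne : S.Nonempty := ⟨∅, by simp [hS]⟩
  obtain ⟨U, hUS, hmax⟩ := S.exists_max_image Finset.card hSne
  rw [hS, Finset.mem_filter, Finset.mem_powerset] at hUS
  obtain ⟨hUA, hUpair⟩ := hUS
  have hUmem : ∀ X ∈ U, X ∈ A := fun X hX => hUA hX
  have hUr : ∀ X ∈ U, X.card = r := fun X hX =>
    (Finset.mem_powersetCard.mp (hUmem X hX)).2
  refine ⟨U, hUr, hUpair, ?_⟩
  -- every r-set is covered by some member of U
  have hcover : ∀ Y ∈ A, ∃ X ∈ U, r - 1 ≤ (X ∩ Y).card := by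
    intro Y hY
    by_contra hcon
    push_neg at hcon
    have hcon' : ∀ X ∈ U, (X ∩ Y).card ≤ r - 2 := by
      intro X hX
      have := hcon X hX
      omega
    have hYnotU : Y ∉ U := by
      intro hYU
      have := hcon' Y hYU
      have hYr : Y.card = r := hUr Y hYU
      rw [Finset.inter_self, hYr] at this
      omega
    have hins : insert Y U ∈ S := by
      rw [hS, Finset.mem_filter, Finset.mem_powerset]
      constructor
      · intro Z hZ
        rcases Finset.mem_insert.mp hZ with rfl | hZ
        · exact hY
        · exact hUA hZ
      · intro X hX Z hZ hXZ
        rcases Finset.mem_insert.mp hX with hX1 | hX1 <;>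
          rcases Finset.mem_insert.mp hZ with hZ1 | hZ1
        · exact absurd (hX1.trans hZ1.symm) hXZ
        · rw [hX1, Finset.inter_comm]; exact hcon' Z hZ1
        · rw [hZ1]; exact hcon' X hX1
        · exact hUpair X hX1 Z hZ1 hXZ
    have := hmax _ hins
    rw [Finset.card_insert_of_notMem hYnotU] at this
    omega
  -- counting
  have hsubset : A ⊆ U.biUnion (fun X => A.filter (fun Y => r - 1 ≤ (X ∩ Y).card)) := by
    intro Y hY
    obtain ⟨X, hXU, hXY⟩ := hcover Y hY
    exact Finset.mem_biUnion.mpr ⟨X, hXU, Finset.mem_filter.mpr ⟨hY, hXY⟩⟩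
  have hkey : n.choose r ≤ U.card * (r * (n - r) + 1) := by
    calc n.choose r = A.card := hAcard.symm
      _ ≤ (U.biUnion (fun X => A.filter (fun Y => r - 1 ≤ (X ∩ Y).card))).card :=
          Finset.card_le_card hsubset
      _ ≤ ∑ X ∈ U, (A.filter (fun Y => r - 1 ≤ (X ∩ Y).card)).card :=
          Finset.card_biUnion_le
      _ ≤ ∑ _X ∈ U, (r * (n - r) + 1) := by
          apply Finset.sum_le_sum
          intro X hX
          exact nbhd_bound n r X (hUr X hX)
      _ = U.card * (r * (n - r) + 1) := by rw [Finset.sum_const, smul_eq_mul]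
  have hpos : (0 : ℚ) < ((r * (n - r) + 1 : ℕ) : ℚ) := by positivity
  rw [div_le_iff₀ hpos]
  exact_mod_cast hkey
end

section
/- Let n ≥ 3 and 2 ≤ r ≤ n−1. The number of sparse-paving matroids of rank r on a ground set of cardinality n is at least 2^⌈C(n,r)/(r(n−r)+1)⌉. -/
/-- A circuit of a matroid: a minimal dependent subset of the ground set. -/
def Matroid.IsCircuit' {α : Type*} (M : Matroid α) (C : Set α) : Prop :=
  C ⊆ M.E ∧ ¬ M.Indep C ∧ ∀ D : Set α, D ⊂ C → M.Indep D

/-- A matroid is paving if it has no circuit of cardinality less than its rank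
(the common cardinality of its bases). -/
def Matroid.IsPaving {α : Type*} (M : Matroid α) : Prop :=
  ∀ C : Set α, M.IsCircuit' C → ∀ B : Set α, M.IsBase B → B.ncard ≤ C.ncard

/-- The set of matroids of rank `r` on the `n`-element ground set `Fin n`. -/
def MatroidSet (n r : ℕ) : Set (Matroid (Fin n)) :=
  {M | M.E = Set.univ ∧ ∀ B : Set (Fin n), M.IsBase B → B.ncard = r}

/-- The set of sparse-paving matroids of rank `r` on `Fin n`. -/
def SparseSet (n r : ℕ) : Set (Matroid (Fin n)) :=
  {M | M ∈ MatroidSet n r ∧ M.IsPaving ∧ M✶.IsPaving}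

/-!
Johnson's construction: on `ℤ/n`, two `r`-subsets with the same element sum cannot share
`r - 1` elements (the two leftover elements would be equal), so each sum class is a family of
`r`-sets meeting pairwise in at most `r - 2` elements, and by pigeonhole some class has at least
`C(n, r) / n` members. Any such family `F` is the set of circuit-hyperplanes of a sparse-paving
matroid, whose independent sets are the sets of size at most `r` outside `F`, and `F` is
recovered from the matroid; so every subfamily of the class gives a different matroid. Finally
`n ≤ r (n - r) + 1`.
-/

open Set

lemma Matroid.isPaving_of_forall_indep {α : Type*} {M : Matroid α}
    (h : ∀ B, M.IsBase B → ∀ I ⊆ M.E, I.ncard < B.ncard → M.Indep I) : M.IsPaving := by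
  rintro C ⟨hCE, hC, -⟩ B hB
  by_contra! hlt
  exact hC (h B hB C hCE hlt)

instance {α : Type*} [Finite α] : Finite (Matroid α) :=
  Finite.of_injective (fun M => (M.E, M.Indep)) fun M N h => by
    simp only [Prod.mk.injEq] at h
    exact Matroid.ext_indep h.1 fun I _ => by rw [h.2]

lemma Finset.card_inter_add_two_le_of_sum_eq {α G : Type*} [DecidableEq α]
    [AddCancelCommMonoid G] {w : α → G} (hw : Function.Injective w) {s t : Finset α} {r : ℕ}
    (hs : s.card = r) (ht : t.card = r) (hst : ∑ a ∈ s, w a = ∑ a ∈ t, w a) (hne : s ≠ t) :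
    (s ∩ t).card + 2 ≤ r := by
  by_contra! hlt
  have hst_ne : (s \ t).Nonempty := Finset.sdiff_nonempty.2 fun hsub =>
    hne (Finset.eq_of_subset_of_card_le hsub (by omega))
  have hsd : (s \ t).card = 1 := by
    have := Finset.card_sdiff_add_card_inter s t
    have := hst_ne.card_pos
    omega
  have htd : (t \ s).card = 1 := by
    rw [← Finset.card_sdiff_comm (hs.trans ht.symm), hsd]
  obtain ⟨a, ha⟩ := Finset.card_eq_one.1 hsd
  obtain ⟨b, hb⟩ := Finset.card_eq_one.1 htd
  have hwab : w a = w b := by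
    simpa [ha, hb] using Finset.sum_sdiff_eq_sum_sdiff_iff.2 hst
  have hat : a ∈ s \ t := ha ▸ Finset.mem_singleton_self a
  have hbt : b ∈ t \ s := hb ▸ Finset.mem_singleton_self b
  exact (Finset.mem_sdiff.1 hat).2 (hw hwab ▸ (Finset.mem_sdiff.1 hbt).1)

namespace SparsePaving

variable {α : Type*} {r : ℕ} {F : Set (Set α)}

def IsSparseFamily (r : ℕ) (F : Set (Set α)) : Prop :=
  (∀ C ∈ F, C.ncard = r) ∧ F.Pairwise fun A B => (A ∩ B).ncard + 2 ≤ r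

namespace IsSparseFamily

lemma mono {G : Set (Set α)} (hF : IsSparseFamily r F) (hG : G ⊆ F) : IsSparseFamily r G :=
  ⟨fun C hC => hF.1 C (hG hC), hF.2.mono hG⟩

lemma eq_of_le_ncard_inter [Finite α] (hF : IsSparseFamily r F) {A B : Set α} (hA : A ∈ F)
    (hB : B ∈ F) (h : r ≤ (A ∩ B).ncard + 1) : A = B := by
  by_contra hne
  have := hF.2 hA hB hne
  omega

lemma eq_of_insert_mem [Finite α] (hF : IsSparseFamily r F) {I : Set α} {a b : α}
    (hI : I.ncard + 1 = r) (ha : a ∉ I) (haF : insert a I ∈ F) (hbF : insert b I ∈ F) :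
    a = b := by
  have hle : I.ncard ≤ (insert a I ∩ insert b I).ncard :=
    ncard_le_ncard (subset_inter (subset_insert _ _) (subset_insert _ _))
  have heq := hF.eq_of_le_ncard_inter haF hbF (by omega)
  have : a ∈ insert b I := heq ▸ mem_insert a I
  exact this.resolve_right ha

lemma exists_subset_ncard_eq_notMem [Finite α] (hF : IsSparseFamily r F) (hr : 0 < r)
    {X : Set α} (hX : r < X.ncard) : ∃ B ⊆ X, B.ncard = r ∧ B ∉ F := by
  obtain ⟨I, hIX, hI⟩ := exists_subset_card_eq (show r - 1 ≤ X.ncard by omega)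
  have hdiff : 1 < (X \ I).ncard := by
    rw [ncard_sdiff hIX]
    omega
  obtain ⟨a, ha, b, hb, hab⟩ := (one_lt_ncard).mp hdiff
  have hins : ∀ e ∈ X \ I, insert e I ⊆ X ∧ (insert e I).ncard = r := fun e he =>
    ⟨insert_subset he.1 hIX, by rw [ncard_insert_of_notMem he.2]; omega⟩
  by_cases haF : insert a I ∈ F
  · refine ⟨insert b I, (hins b hb).1, (hins b hb).2, fun hbF => hab ?_⟩
    exact hF.eq_of_insert_mem (by omega) ha.2 haF hbF
  · exact ⟨insert a I, (hins a ha).1, (hins a ha).2, haF⟩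

lemma exists_insert_of_ncard_lt_ncard [Finite α] (hF : IsSparseFamily r F) {I J : Set α}
    (hI : I.ncard ≤ r ∧ I ∉ F) (hJ : J.ncard ≤ r ∧ J ∉ F) (hIJ : I.ncard < J.ncard) :
    ∃ e ∈ J, e ∉ I ∧ (insert e I).ncard ≤ r ∧ insert e I ∉ F := by
  have hcard : ∀ e ∉ I, (insert e I).ncard = I.ncard + 1 := fun e he => ncard_insert_of_notMem he
  by_cases hsmall : I.ncard + 2 ≤ r
  · obtain ⟨e, heJ, heI⟩ := exists_mem_notMem_of_ncard_lt_ncard hIJ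
    refine ⟨e, heJ, heI, by rw [hcard e heI]; omega, fun he => ?_⟩
    have := hF.1 _ he
    rw [hcard e heI] at this
    omega
  by_contra! hall
  have hIr : I.ncard + 1 = r := by omega
  have hJI : (J \ I).Subsingleton := fun a ha b hb =>
    hF.eq_of_insert_mem hIr ha.2 (hall a ha.1 ha.2 (by rw [hcard a ha.2]; omega))
      (hall b hb.1 hb.2 (by rw [hcard b hb.2]; omega))
  obtain ⟨e, he⟩ := sdiff_nonempty_of_ncard_lt_ncard hIJ
  have hJe : J ⊆ insert e I := by
    rw [← union_singleton, ← sdiff_subset_iff, hJI.eq_singleton_of_mem he]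
  have : J = insert e I := eq_of_subset_of_ncard_le hJe (by rw [hcard e he.2]; omega)
  exact hJ.2 (this ▸ hall e he.1 he.2 (by rw [hcard e he.2]; omega))

variable [Finite α]

noncomputable def matroid (hF : IsSparseFamily r F) (hr : 0 < r) : Matroid α :=
  (IndepMatroid.ofFinite finite_univ (fun I => I.ncard ≤ r ∧ I ∉ F)
    ⟨by simp, fun h => hr.ne (by simpa using hF.1 ∅ h)⟩
    (fun I J hJ hIJ => ⟨(ncard_le_ncard hIJ).trans hJ.1, fun hI => hJ.2 <| by
      rwa [← eq_of_subset_of_ncard_le hIJ (hJ.1.trans (hF.1 I hI).ge)]⟩)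
    (fun _ _ hI hJ hIJ => hF.exists_insert_of_ncard_lt_ncard hI hJ hIJ)
    (fun I _ => subset_univ I)).matroid

variable (hF : IsSparseFamily r F) (hr : 0 < r)

@[simp] lemma matroid_E : (hF.matroid hr).E = univ := rfl

@[simp] lemma matroid_indep_iff {I : Set α} : (hF.matroid hr).Indep I ↔ I.ncard ≤ r ∧ I ∉ F := by
  simp [matroid]

lemma matroid_isBase_iff (hrα : r < Nat.card α) {B : Set α} :
    (hF.matroid hr).IsBase B ↔ B.ncard = r ∧ B ∉ F := by
  obtain ⟨B₀, -, hB₀, hB₀F⟩ := hF.exists_subset_ncard_eq_notMem hr (X := univ) (by simpa)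
  obtain ⟨B₁, hB₁, hB₀B₁⟩ := ((hF.matroid_indep_iff hr).2 ⟨hB₀.le, hB₀F⟩).exists_isBase_superset
  have hB₁r : B₁.ncard = r :=
    ((hF.matroid_indep_iff hr).1 hB₁.indep).1.antisymm (hB₀ ▸ ncard_le_ncard hB₀B₁)
  refine ⟨fun hB => ⟨hB₁r ▸ hB.ncard_eq_ncard_of_isBase hB₁,
    ((hF.matroid_indep_iff hr).1 hB.indep).2⟩, fun ⟨hBr, hBF⟩ => ?_⟩
  obtain ⟨B₂, hB₂, hBB₂⟩ := ((hF.matroid_indep_iff hr).2 ⟨hBr.le, hBF⟩).exists_isBase_superset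
  rwa [eq_of_subset_of_ncard_le hBB₂ (by rw [hB₂.ncard_eq_ncard_of_isBase hB₁, hB₁r, hBr])]

lemma setOf_dep_matroid_eq : {C | C.ncard = r ∧ ¬ (hF.matroid hr).Indep C} = F := by
  ext C
  simp only [mem_ofPred_eq, matroid_indep_iff, not_and, not_not]
  exact ⟨fun ⟨hC, h⟩ => h hC.le, fun hC => ⟨hF.1 C hC, fun _ => hC⟩⟩

lemma isPaving_matroid : (hF.matroid hr).IsPaving := by
  refine Matroid.isPaving_of_forall_indep fun B hB I _ hI => ?_
  have hBr := ((hF.matroid_indep_iff hr).1 hB.indep).1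
  exact (hF.matroid_indep_iff hr).2 ⟨by omega, fun hIF => by have := hF.1 I hIF; omega⟩

lemma isPaving_dual_matroid (hrα : r < Nat.card α) : (hF.matroid hr)✶.IsPaving := by
  refine Matroid.isPaving_of_forall_indep fun B hB I hIE hI => ?_
  rw [Matroid.dual_isBase_iff', matroid_E, ← compl_eq_univ_sdiff,
    hF.matroid_isBase_iff hr hrα] at hB
  have hBc := ncard_add_ncard_compl B
  have hIc := ncard_add_ncard_compl I
  obtain ⟨G, hGI, hGr, hGF⟩ := hF.exists_subset_ncard_eq_notMem hr (X := Iᶜ) (by omega)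
  rw [Matroid.dual_indep_iff_exists']
  exact ⟨hIE, G, (hF.matroid_isBase_iff hr hrα).2 ⟨hGr, hGF⟩,
    disjoint_compl_right.mono_right hGI⟩

end IsSparseFamily

lemma card_isSparseFamily_le_ncard_sparseSet {n : ℕ} (hr : 0 < r) (hrn : r < n) :
    Nat.card {F : Set (Set (Fin n)) // IsSparseFamily r F} ≤ (SparseSet n r).ncard := by
  have hrn' : r < Nat.card (Fin n) := by simpa using hrn
  let toSparse (F : {F : Set (Set (Fin n)) // IsSparseFamily r F}) : SparseSet n r :=
    ⟨F.2.matroid hr, ⟨⟨rfl, fun B hB => ((F.2.matroid_isBase_iff hr hrn').1 hB).1⟩,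
      F.2.isPaving_matroid hr, F.2.isPaving_dual_matroid hr hrn'⟩⟩
  rw [← Nat.card_coe_set_eq]
  refine Nat.card_le_card_of_injective toSparse fun F G hFG => Subtype.ext ?_
  rw [← F.2.setOf_dep_matroid_eq hr, ← G.2.setOf_dep_matroid_eq hr,
    show F.2.matroid hr = G.2.matroid hr from congrArg Subtype.val hFG]

lemma IsSparseFamily.two_pow_ncard_le [Finite α] (hF : IsSparseFamily r F) :
    2 ^ F.ncard ≤ Nat.card {G : Set (Set α) // IsSparseFamily r G} := by
  rw [← ncard_powerset F, ← Nat.card_coe_set_eq]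
  exact Nat.card_le_card_of_injective (fun G => ⟨G.1, hF.mono G.2⟩)
    fun G H h => by simpa [Subtype.ext_iff] using h

lemma exists_isSparseFamily_card_div_le [Fintype α] {G : Type*} [Fintype G]
    [Nonempty G] [AddCancelCommMonoid G] {w : α → G} (hw : Function.Injective w) (r : ℕ) :
    ∃ F : Set (Set α), IsSparseFamily r F ∧
      ((Fintype.card α).choose r : ℚ) / Fintype.card G ≤ F.ncard := by
  classical
  have hsum : ((Finset.univ : Finset G).card • (((Fintype.card α).choose r : ℚ) / Fintype.card G))
      ≤ (Finset.powersetCard r (Finset.univ : Finset α)).card := by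
    rw [Finset.card_powersetCard, nsmul_eq_mul, Finset.card_univ, Finset.card_univ,
      mul_div_cancel₀ _ (by exact_mod_cast Fintype.card_ne_zero)]
  obtain ⟨c, -, hc⟩ := Finset.exists_le_card_fiber_of_nsmul_le_card_of_maps_to
    (f := fun s => ∑ a ∈ s, w a) (fun _ _ => Finset.mem_univ _) Finset.univ_nonempty hsum
  set T := (Finset.powersetCard r Finset.univ).filter fun s => ∑ a ∈ s, w a = c
  have hT : ∀ s ∈ T, s.card = r ∧ ∑ a ∈ s, w a = c := fun s hs => by
    simpa [T, Finset.mem_powersetCard] using hs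
  refine ⟨(↑) '' (T : Set (Finset α)), ⟨?_, ?_⟩, ?_⟩
  · rintro _ ⟨s, hs, rfl⟩
    rw [ncard_coe_finset, (hT s hs).1]
  · rintro _ ⟨s, hs, rfl⟩ _ ⟨t, ht, rfl⟩ hst
    rw [← Finset.coe_inter, ncard_coe_finset]
    exact Finset.card_inter_add_two_le_of_sum_eq hw (hT s hs).1 (hT t ht).1
      ((hT s hs).2.trans (hT t ht).2.symm) (fun h => hst (congrArg _ h))
  · rwa [ncard_image_of_injective _ Finset.coe_injective, ncard_coe_finset]

end SparsePaving

theorem stmt6_general (n r : ℕ) (hr2 : 2 ≤ r) (hrn : r ≤ n - 1) :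
    2 ^ ⌈(n.choose r : ℚ) / ((r * (n - r) + 1 : ℕ) : ℚ)⌉₊ ≤ (SparseSet n r).ncard := by
  have : NeZero n := ⟨by omega⟩
  obtain ⟨F, hF, hFcard⟩ := SparsePaving.exists_isSparseFamily_card_div_le
    (G := Fin n) Function.injective_id r
  rw [Fintype.card_fin] at hFcard
  have hnd : n ≤ r * (n - r) + 1 := by
    obtain ⟨k, rfl⟩ : ∃ k, n = r + k + 1 := ⟨n - r - 1, by omega⟩
    rw [show r + k + 1 - r = k + 1 by omega, mul_add_one]
    nlinarith
  have hceil : ⌈(n.choose r : ℚ) / ((r * (n - r) + 1 : ℕ) : ℚ)⌉₊ ≤ F.ncard :=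
    Nat.ceil_le.2 <| (div_le_div_of_nonneg_left (by positivity) (Nat.cast_pos.2 (by omega))
      (by exact_mod_cast hnd)).trans hFcard
  calc 2 ^ ⌈(n.choose r : ℚ) / ((r * (n - r) + 1 : ℕ) : ℚ)⌉₊ ≤ 2 ^ F.ncard :=
        Nat.pow_le_pow_right two_pos hceil
    _ ≤ Nat.card {F : Set (Set (Fin n)) // SparsePaving.IsSparseFamily r F} := hF.two_pow_ncard_le
    _ ≤ (SparseSet n r).ncard :=
        SparsePaving.card_isSparseFamily_le_ncard_sparseSet (by omega) (by omega)

/-- `|Sparse_{n,r}| ≥ 2^⌈C(n,r)/(r(n-r)+1)⌉`. -/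
theorem stmt6 (n r : ℕ) (hn : 3 ≤ n) (hr2 : 2 ≤ r) (hrn : r ≤ n - 1) :
    2 ^ ⌈(n.choose r : ℚ) / ((r * (n - r) + 1 : ℕ) : ℚ)⌉₊ ≤ (SparseSet n r).ncard :=
  stmt6_general n r hr2 hrn
end

section
/- Let S be a set of cardinality n and Ŝ = S ∪ {n+1}. For 2 ≤ r ≤ n−1, the map sending a sparse-paving matroid M on S of rank r with basis set B to the matroid on Ŝ with basis set B ∪ {X ⊆ Ŝ : |X| = r, n+1 ∈ X} is a well-defined injection from the sparse-paving matroids of rank r on S into the sparse-paving matroids of rank r on Ŝ. In particular |Sparse_{n,r}| ≤ |Sparse_{n+1,r}|. -/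
/-!
The new independent sets are the sets of size `< r` together with the new bases. Since `M` is
paving, every `(r - 1)`-subset of `S` is independent in `M`, so augmentation inside `M` gives the
augmentation axiom. Paving of the extension is then immediate, and its dual is paving because
every set `Y` with `|Y| > r` contains a basis: an `r`-set through the new point if `Y` contains
it, and otherwise a basis of `M`, since `M✶` is paving. The bases of `M` are recovered as the new
bases avoiding the new point, which gives injectivity.
-/

open Set

namespace Matroid

variable {α : Type*} {M : Matroid α} {B C I : Set α}

lemma isCircuit'_iff_isCircuit : M.IsCircuit' C ↔ M.IsCircuit C := by
  rw [isCircuit_iff_forall_ssubset, Dep, IsCircuit']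
  tauto

lemma Indep.isBase_of_ncard_le [M.RankFinite] (hI : M.Indep I) (hB : M.IsBase B)
    (hBI : B.ncard ≤ I.ncard) : M.IsBase I := by
  obtain ⟨B', hB', hIB'⟩ := hI.exists_isBase_superset
  rwa [eq_of_subset_of_ncard_le hIB' (by rwa [hB'.ncard_eq_ncard_of_isBase hB]) hB'.finite]

lemma isPaving_iff [M.Finite] (hB : M.IsBase B) :
    M.IsPaving ↔ ∀ I ⊆ M.E, I.ncard < B.ncard → M.Indep I := by
  refine ⟨fun hM I hIE hIB => by_contra fun hI => ?_, fun h C hC B' hB' => ?_⟩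
  · obtain ⟨C, hCI, hC⟩ := ((not_indep_iff hIE).1 hI).exists_isCircuit_subset
    have := hM C (isCircuit'_iff_isCircuit.2 hC) B hB
    have := ncard_le_ncard hCI (M.ground_finite.subset hIE)
    omega
  · rw [hB'.ncard_eq_ncard_of_isBase hB]
    by_contra! hlt
    exact (isCircuit'_iff_isCircuit.1 hC).dep.not_indep (h C hC.1 hlt)

lemma isPaving_dual_iff [M.Finite] (hB : M.IsBase B) :
    M✶.IsPaving ↔ ∀ Y ⊆ M.E, B.ncard < Y.ncard → ∃ B', M.IsBase B' ∧ B' ⊆ Y := by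
  have hcard : ∀ X ⊆ M.E, (M.E \ X).ncard + X.ncard = M.E.ncard := fun X hX =>
    ncard_sdiff_add_ncard_of_subset hX M.ground_finite
  have hcoindep : ∀ Y ⊆ M.E, M✶.Indep (M.E \ Y) ↔ ∃ B', M.IsBase B' ∧ B' ⊆ Y := fun Y hY => by
    rw [← coindep_def, coindep_iff_exists sdiff_subset, sdiff_sdiff_cancel_left hY]
  rw [isPaving_iff hB.compl_isBase_dual, dual_ground]
  refine ⟨fun h Y hY hBY => (hcoindep Y hY).1 (h _ sdiff_subset ?_), fun h I hI hIB => ?_⟩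
  · have := hcard Y hY; have := hcard B hB.subset_ground; omega
  · rw [← sdiff_sdiff_cancel_left hI]
    refine (hcoindep _ sdiff_subset).2 (h _ sdiff_subset ?_)
    have := hcard I hI; have := hcard B hB.subset_ground; omega

lemma IsPaving.exists_insert_isBase [M.Finite] (hM : M.IsPaving) (hB : M.IsBase B)
    (hIE : I ⊆ M.E) (hIB : I.ncard + 1 = B.ncard) : ∃ e ∈ B \ I, M.IsBase (insert e I) := by
  have hI : M.Indep I := (isPaving_iff hB).1 hM I hIE (by omega)
  have hIB' : ¬ M.IsBase I := fun h => by
    rw [h.ncard_eq_ncard_of_isBase hB] at hIB; omega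
  obtain ⟨e, he, heI⟩ := hI.exists_insert_of_not_isBase hIB' hB
  refine ⟨e, he, heI.isBase_of_ncard_le hB ?_⟩
  rw [ncard_insert_of_notMem he.2 (M.ground_finite.subset hIE)]
  omega

end Matroid

lemma Fin.exists_eq_image_castSucc {n : ℕ} {I : Set (Fin (n + 1))} (h : Fin.last n ∉ I) :
    ∃ I₀ : Set (Fin n), I = Fin.castSucc '' I₀ := by
  obtain ⟨I₀, hI₀⟩ := subset_range_iff_exists_image_eq.1 fun x hx =>
    ⟨x.castPred (ne_of_mem_of_not_mem hx h), Fin.castSucc_castPred x _⟩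
  exact ⟨I₀, hI₀.symm⟩

lemma Fin.ncard_image_castSucc {n : ℕ} (I : Set (Fin n)) : (Fin.castSucc '' I).ncard = I.ncard :=
  ncard_image_of_injective I (Fin.castSucc_injective n)

namespace Matroid

variable {n r : ℕ} {M M₁ M₂ : Matroid (Fin n)} {B₀ : Set (Fin n)} {B I J : Set (Fin (n + 1))}

def IsExtendLastBase (M : Matroid (Fin n)) (r : ℕ) (B : Set (Fin (n + 1))) : Prop :=
  (∃ B₀ : Set (Fin n), M.IsBase B₀ ∧ B = Fin.castSucc '' B₀) ∨ (B.ncard = r ∧ Fin.last n ∈ B)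

lemma isExtendLastBase_image_castSucc_iff :
    IsExtendLastBase M r (Fin.castSucc '' B₀) ↔ M.IsBase B₀ := by
  refine ⟨?_, fun h => .inl ⟨B₀, h, rfl⟩⟩
  rintro (⟨B₁, hB₁, he⟩ | ⟨-, ⟨x, -, hx⟩⟩)
  · rwa [(image_eq_image (Fin.castSucc_injective n)).1 he]
  · exact absurd hx (Fin.castSucc_lt_last x).ne

lemma IsExtendLastBase.ncard_eq (hM : M ∈ MatroidSet n r) (hB : IsExtendLastBase M r B) :
    B.ncard = r := by
  obtain ⟨B₀, hB₀, rfl⟩ | ⟨h, -⟩ := hB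
  · rw [Fin.ncard_image_castSucc, hM.2 B₀ hB₀]
  · exact h

def ExtendLastIndep (M : Matroid (Fin n)) (r : ℕ) (I : Set (Fin (n + 1))) : Prop :=
  I.ncard < r ∨ IsExtendLastBase M r I

lemma ExtendLastIndep.ncard_le (hM : M ∈ MatroidSet n r) (hI : ExtendLastIndep M r I) :
    I.ncard ≤ r :=
  hI.elim le_of_lt fun h => (h.ncard_eq hM).le

lemma ExtendLastIndep.subset (hM : M ∈ MatroidSet n r) (hJ : ExtendLastIndep M r J)
    (hIJ : I ⊆ J) : ExtendLastIndep M r I := by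
  obtain hlt | rfl := hIJ.ssubset_or_eq
  · exact .inl ((ncard_lt_ncard hlt).trans_le (hJ.ncard_le hM))
  · exact hJ

lemma ExtendLastIndep.exists_insert_of_ncard_lt (hM : M ∈ MatroidSet n r) (hpav : M.IsPaving)
    (hI : ExtendLastIndep M r I) (hJ : ExtendLastIndep M r J) (hIJ : I.ncard < J.ncard) :
    ∃ e ∈ J, e ∉ I ∧ ExtendLastIndep M r (insert e I) := by
  have hJr := hJ.ncard_le hM
  obtain ⟨e, heJ, heI⟩ := exists_mem_notMem_of_ncard_lt_ncard hIJ
  have hcard : ∀ e ∉ I, (insert e I).ncard = I.ncard + 1 := fun e he => ncard_insert_of_notMem he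
  by_cases hsmall : I.ncard + 1 < r
  · exact ⟨e, heJ, heI, .inl (hcard e heI ▸ hsmall)⟩
  have hJB : IsExtendLastBase M r J := hJ.resolve_left (by omega)
  by_cases hlastI : Fin.last n ∈ I
  · exact ⟨e, heJ, heI, .inr (.inr ⟨by rw [hcard e heI]; omega, mem_insert_of_mem _ hlastI⟩)⟩
  by_cases hlastJ : Fin.last n ∈ J
  · exact ⟨_, hlastJ, hlastI, .inr (.inr ⟨by rw [hcard _ hlastI]; omega, mem_insert _ _⟩)⟩
  obtain ⟨B₀, hB₀, rfl⟩ := hJB.resolve_right fun h => hlastJ h.2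
  obtain ⟨I₀, rfl⟩ := Fin.exists_eq_image_castSucc hlastI
  obtain ⟨e, ⟨heB₀, heI₀⟩, hbase⟩ := hpav.exists_insert_isBase hB₀ (hM.1 ▸ subset_univ I₀)
    (by rw [hM.2 B₀ hB₀, ← Fin.ncard_image_castSucc]; omega)
  refine ⟨Fin.castSucc e, mem_image_of_mem _ heB₀,
    fun h => heI₀ ((Fin.castSucc_injective n).mem_set_image.1 h), .inr (.inl ⟨_, hbase, ?_⟩)⟩
  rw [image_insert_eq]

def extendLast (M : Matroid (Fin n)) (r : ℕ) (hM : M ∈ MatroidSet n r) (hpav : M.IsPaving) :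
    Matroid (Fin (n + 1)) :=
  (IndepMatroid.ofFinite (toFinite univ) (ExtendLastIndep M r)
    ((ExtendLastIndep.subset hM · (empty_subset _)) <|
      .inr (.inl ⟨_, M.exists_isBase.choose_spec, rfl⟩))
    (fun _ _ hJ hIJ => hJ.subset hM hIJ)
    (fun _ _ hI hJ hIJ => hI.exists_insert_of_ncard_lt hM hpav hJ hIJ)
    (fun I _ => subset_univ I)).matroid

variable (hM : M ∈ MatroidSet n r) (hpav : M.IsPaving)

lemma extendLast_isBase_iff : (extendLast M r hM hpav).IsBase B ↔ IsExtendLastBase M r B := by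
  have hindep : ∀ {I}, (extendLast M r hM hpav).Indep I ↔ ExtendLastIndep M r I := Iff.rfl
  obtain ⟨B₀, hB₀⟩ := M.exists_isBase
  have hB₀' : IsExtendLastBase M r (Fin.castSucc '' B₀) := .inl ⟨B₀, hB₀, rfl⟩
  refine ⟨fun hB => ?_, fun hB => ?_⟩
  · obtain ⟨B', hB', hB₀B'⟩ := (hindep.2 (.inr hB₀')).exists_isBase_superset
    have hB'r : B'.ncard = r := le_antisymm (hindep.1 hB'.indep |>.ncard_le hM)
      (hB₀'.ncard_eq hM ▸ ncard_le_ncard hB₀B')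
    rw [← hB.ncard_eq_ncard_of_isBase hB'] at hB'r
    exact (hindep.1 hB.indep).resolve_left hB'r.not_lt
  · refine (hindep.2 (.inr hB)).isBase_of_maximal fun J hJ hBJ => ?_
    exact eq_of_subset_of_ncard_le hBJ ((hB.ncard_eq hM).symm ▸ (hindep.1 hJ).ncard_le hM)

lemma extendLast_injective (hM₁ : M₁ ∈ MatroidSet n r) (hM₂ : M₂ ∈ MatroidSet n r)
    (hpav₁ : M₁.IsPaving) (hpav₂ : M₂.IsPaving)
    (h : extendLast M₁ r hM₁ hpav₁ = extendLast M₂ r hM₂ hpav₂) : M₁ = M₂ :=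
  ext_isBase (hM₁.1.trans hM₂.1.symm) fun B₀ _ => by
    rw [← isExtendLastBase_image_castSucc_iff (r := r), ← extendLast_isBase_iff hM₁ hpav₁, h,
      extendLast_isBase_iff hM₂ hpav₂, isExtendLastBase_image_castSucc_iff]

lemma extendLast_mem_sparseSet (hM : M ∈ SparseSet n r) (hr : 0 < r) :
    extendLast M r hM.1 hM.2.1 ∈ SparseSet (n + 1) r := by
  obtain ⟨hMr, hpav, hpav_dual⟩ := hM
  obtain ⟨B₀, hB₀⟩ := M.exists_isBase
  have hB : (extendLast M r hMr hpav).IsBase (Fin.castSucc '' B₀) :=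
    (extendLast_isBase_iff hMr hpav).2 (.inl ⟨B₀, hB₀, rfl⟩)
  have hBr : (Fin.castSucc '' B₀).ncard = r := by rw [Fin.ncard_image_castSucc, hMr.2 B₀ hB₀]
  refine ⟨⟨rfl, fun B hB => ((extendLast_isBase_iff hMr hpav).1 hB).ncard_eq hMr⟩, ?_, ?_⟩
  · exact (isPaving_iff hB).2 fun I _ hI => .inl (hBr ▸ hI)
  refine (isPaving_dual_iff hB).2 fun Y _ hY => ?_
  rw [hBr] at hY
  by_cases hlast : Fin.last n ∈ Y
  · obtain ⟨T, hTY, hT⟩ := exists_subset_card_eq (s := Y \ {Fin.last n}) (n := r - 1)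
      (by rw [ncard_sdiff_singleton_of_mem hlast]; omega)
    have hlastT : Fin.last n ∉ T := fun h => (hTY h).2 rfl
    refine ⟨insert (Fin.last n) T, (extendLast_isBase_iff hMr hpav).2 (.inr ⟨?_, mem_insert _ _⟩),
      insert_subset hlast (hTY.trans sdiff_subset)⟩
    rw [ncard_insert_of_notMem hlastT]
    omega
  · obtain ⟨Y₀, rfl⟩ := Fin.exists_eq_image_castSucc hlast
    obtain ⟨B₁, hB₁, hB₁Y₀⟩ := (isPaving_dual_iff hB₀).1 hpav_dual Y₀ (hMr.1 ▸ subset_univ Y₀)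
      (by rw [hMr.2 B₀ hB₀, ← Fin.ncard_image_castSucc]; exact hY)
    exact ⟨_, (extendLast_isBase_iff hMr hpav).2 (.inl ⟨B₁, hB₁, rfl⟩), image_mono hB₁Y₀⟩

def sparseExtendLast (n r : ℕ) (hr : 0 < r) (M : SparseSet n r) : SparseSet (n + 1) r :=
  ⟨extendLast M r M.2.1 M.2.2.1, extendLast_mem_sparseSet M.2 hr⟩

lemma sparseExtendLast_injective (hr : 0 < r) : Function.Injective (sparseExtendLast n r hr) :=
  fun M₁ M₂ h => Subtype.ext <|
    extendLast_injective M₁.2.1 M₂.2.1 M₁.2.2.1 M₂.2.2.1 (congrArg Subtype.val h)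

end Matroid

instance inst_s7 {α : Type*} [Finite α] : Finite (Matroid α) :=
  .of_injective (fun M : Matroid α => (M.E, M.IsBase)) fun M₁ M₂ h => by
    simp only [Prod.mk.injEq] at h
    exact Matroid.ext_isBase h.1 fun B _ => by rw [h.2]

theorem stmt7_general (n r : ℕ) (hr2 : 2 ≤ r) :
    (∃ f : SparseSet n r → SparseSet (n + 1) r,
      Function.Injective f ∧
      ∀ M : SparseSet n r, ∀ B : Set (Fin (n + 1)),
        (f M : Matroid (Fin (n + 1))).IsBase B ↔
          ((∃ B₀ : Set (Fin n), (M : Matroid (Fin n)).IsBase B₀ ∧ B = Fin.castSucc '' B₀) ∨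
            (B.ncard = r ∧ Fin.last n ∈ B))) ∧
    (SparseSet n r).ncard ≤ (SparseSet (n + 1) r).ncard := by
  have hf := Matroid.sparseExtendLast_injective (n := n) (r := r) (by omega)
  refine ⟨⟨_, hf, fun M _ => Matroid.extendLast_isBase_iff M.2.1 M.2.2.1⟩, ?_⟩
  simpa only [Nat.card_coe_set_eq] using Nat.card_le_card_of_injective _ hf

/-- Extending each sparse-paving matroid of rank `r` on `S = Fin n`
to `Ŝ = Fin (n+1)` by adding all `r`-subsets containing the new element `Fin.last n`
as bases gives a well-defined injection `Sparse_{n,r} ↪ Sparse_{n+1,r}`, whence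
`|Sparse_{n,r}| ≤ |Sparse_{n+1,r}|`. -/
theorem stmt7 (n r : ℕ) (hn : 3 ≤ n) (hr2 : 2 ≤ r) (hrn : r ≤ n - 1) :
    (∃ f : SparseSet n r → SparseSet (n + 1) r,
      Function.Injective f ∧
      ∀ M : SparseSet n r, ∀ B : Set (Fin (n + 1)),
        (f M : Matroid (Fin (n + 1))).IsBase B ↔
          ((∃ B₀ : Set (Fin n), (M : Matroid (Fin n)).IsBase B₀ ∧ B = Fin.castSucc '' B₀) ∨
            (B.ncard = r ∧ Fin.last n ∈ B))) ∧
    (SparseSet n r).ncard ≤ (SparseSet (n + 1) r).ncard :=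
  stmt7_general n r hr2
end

section
/- Let S be a finite set of cardinality n and 2 ≤ r ≤ n−1. Then the family of all r-subsets of S can be partitioned into γ parts, each of which is a family of r-subsets with pairwise intersections of size at most r−2, where γ = max_{0≤h≤r, h odd} max{C(n−r, r−h), C(r,h)} + max_{0≤h≤r, h even} max{C(n−r, r−h), C(r,h)}. -/
/-- `γ = max_{0≤h≤r, h odd} max{C(n-r,r-h), C(r,h)} +
     max_{0≤h≤r, h even} max{C(n-r,r-h), C(r,h)}`. -/
def gamma (n r : ℕ) : ℕ :=
  (((Finset.range (r + 1)).filter (fun h => Odd h)).sup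
      fun h => max ((n - r).choose (r - h)) (r.choose h))
    + (((Finset.range (r + 1)).filter (fun h => Even h)).sup
      fun h => max ((n - r).choose (r - h)) (r.choose h))

lemma choose_ge : ∀ m k : ℕ, 1 ≤ k → k + 1 ≤ m → m ≤ m.choose k := by
  intro m
  induction m with
  | zero => intro k h1 h2; omega
  | succ m ih =>
    intro k h1 h2
    rcases Nat.lt_or_ge k 2 with h | h
    · have : k = 1 := by omega
      subst this
      simp [Nat.choose_one_right]
    rcases Nat.lt_or_ge k m with h' | h'
    · obtain ⟨j, rfl⟩ : ∃ j, k = j + 1 := ⟨k - 1, by omega⟩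
      have hrw : (m + 1).choose (j + 1) = m.choose j + m.choose (j + 1) :=
        Nat.choose_succ_succ' m j
      have hj := ih j (by omega) (by omega)
      have hk := ih (j + 1) (by omega) (by omega)
      omega
    · have : k = m := by omega
      subst this
      rw [Nat.choose_succ_self_right]

lemma gamma_ge_parts (n r a b : ℕ)
    (ha : a ∈ (Finset.range (r + 1)).filter (fun h => Odd h))
    (hb : b ∈ (Finset.range (r + 1)).filter (fun h => Even h)) :
    max ((n - r).choose (r - a)) (r.choose a) + max ((n - r).choose (r - b)) (r.choose b)
      ≤ gamma n r :=
  Nat.add_le_add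
    (Finset.le_sup (f := fun h => max ((n - r).choose (r - h)) (r.choose h)) ha)
    (Finset.le_sup (f := fun h => max ((n - r).choose (r - h)) (r.choose h)) hb)

lemma gamma_ge (n r : ℕ) (hr2 : 2 ≤ r) (hrn : r + 1 ≤ n) (hex : ¬(n = 4 ∧ r = 2)) :
    n ≤ gamma n r := by
  have h1mem : (1 : ℕ) ∈ (Finset.range (r + 1)).filter (fun h => Odd h) := by
    simp [Finset.mem_filter]; omega
  have h2mem : (2 : ℕ) ∈ (Finset.range (r + 1)).filter (fun h => Even h) := by
    simp [Finset.mem_filter]; omega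
  have h0mem : (0 : ℕ) ∈ (Finset.range (r + 1)).filter (fun h => Even h) := by
    simp [Finset.mem_filter]
  rcases Nat.lt_or_ge r 3 with hr3 | hr3
  · -- r = 2
    have : r = 2 := by omega
    subst this
    rcases Nat.lt_or_ge n 4 with hn4 | hn4
    · -- n = 3
      have : n = 3 := by omega
      subst this
      show 3 ≤ gamma 3 2
      decide
    · -- n ≥ 5 (n = 4 excluded)
      have hn5 : 5 ≤ n := by
        rcases Nat.lt_or_ge n 5 with h | h
        · exact absurd ⟨by omega, rfl⟩ hex
        · exact h
      have P := gamma_ge_parts n 2 1 0 h1mem h0mem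
      have p1 : (n - 2).choose 1 ≤ max ((n - 2).choose (2 - 1)) (Nat.choose 2 1) :=
        le_max_left _ _
      have p2 : (n - 2).choose 2 ≤ max ((n - 2).choose (2 - 0)) (Nat.choose 2 0) :=
        le_max_left _ _
      have e1 : (n - 2).choose 1 = n - 2 := Nat.choose_one_right _
      have e2 : n - 2 ≤ (n - 2).choose 2 := choose_ge (n - 2) 2 (by omega) (by omega)
      omega
  · -- r ≥ 3
    have P := gamma_ge_parts n r 1 2 h1mem h2mem
    have p1 : (n - r).choose (r - 1) ≤ max ((n - r).choose (r - 1)) (r.choose 1) :=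
      le_max_left _ _
    have p2 : r.choose 1 ≤ max ((n - r).choose (r - 1)) (r.choose 1) := le_max_right _ _
    have p3 : r.choose 2 ≤ max ((n - r).choose (r - 2)) (r.choose 2) := le_max_right _ _
    have e1 : r.choose 1 = r := Nat.choose_one_right _
    have e2 : r ≤ r.choose 2 := choose_ge r 2 (by omega) (by omega)
    have hkey : n - r ≤ r ∨ n - r ≤ (n - r).choose (r - 1) := by
      rcases le_or_gt (n - r) r with h | h
      · exact Or.inl h
      · exact Or.inr (choose_ge (n - r) (r - 1) (by omega) (by omega))
    omega

/-- The `r`-subsets of an `n`-set can be partitioned into `γ`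
classes, each of which has pairwise intersections of size at most `r-2`. -/
theorem stmt14 (n r : ℕ) (hr2 : 2 ≤ r) (hrn : r ≤ n - 1) :
    ∃ f : Finset (Fin n) → Fin (gamma n r),
      ∀ X Y : Finset (Fin n), X.card = r → Y.card = r → X ≠ Y →
        f X = f Y → (X ∩ Y).card ≤ r - 2 := by
  have hn : r + 1 ≤ n := by omega
  by_cases hex : n = 4 ∧ r = 2
  · obtain ⟨rfl, rfl⟩ := hex
    refine ⟨fun X =>
      ⟨(min (∑ x ∈ X, 2 ^ x.val) (15 - ∑ x ∈ X, 2 ^ x.val) % 4) % 3,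
        Nat.mod_lt _ (by norm_num)⟩, ?_⟩
    decide
  · have hγ : n ≤ gamma n r := gamma_ge n r hr2 hn hex
    have hpos : 0 < gamma n r := by omega
    refine ⟨fun X => ⟨(∑ x ∈ X, x.val) % gamma n r, Nat.mod_lt _ hpos⟩, ?_⟩
    intro X Y hX hY hne hf
    by_contra hcon
    push_neg at hcon
    have hsub : X ∩ Y ⊆ X := Finset.inter_subset_left
    have hle : (X ∩ Y).card ≤ r := hX ▸ Finset.card_le_card hsub
    have hlt : (X ∩ Y).card < r := by
      rcases eq_or_lt_of_le hle with h | h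
      · exfalso
        have h1 : X ∩ Y = X := Finset.eq_of_subset_of_card_le hsub (by omega)
        have h2 : X ⊆ Y := by rw [← h1]; exact Finset.inter_subset_right
        exact hne (Finset.eq_of_subset_of_card_le h2 (by omega))
      · exact h
    have hcard : (X ∩ Y).card = r - 1 := by omega
    have hXd : (X \ Y).card = 1 := by
      have := Finset.card_sdiff_add_card_inter X Y
      omega
    have hYd : (Y \ X).card = 1 := by
      have := Finset.card_sdiff_add_card_inter Y X
      rw [Finset.inter_comm] at this
      omega
    obtain ⟨a, ha⟩ := Finset.card_eq_one.mp hXd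
    obtain ⟨b, hb⟩ := Finset.card_eq_one.mp hYd
    have hab : a ≠ b := by
      intro h
      have haX : a ∈ X \ Y := ha ▸ Finset.mem_singleton_self a
      have hbY : b ∈ Y \ X := hb ▸ Finset.mem_singleton_self b
      rw [Finset.mem_sdiff] at haX hbY
      exact haX.2 (h ▸ hbY.1)
    have hXeq : ∑ x ∈ X, x.val = a.val + ∑ x ∈ X ∩ Y, x.val := by
      conv_lhs => rw [← Finset.sdiff_union_inter X Y]
      rw [Finset.sum_union (Finset.disjoint_sdiff_inter X Y), ha, Finset.sum_singleton]
    have hYeq : ∑ x ∈ Y, x.val = b.val + ∑ x ∈ X ∩ Y, x.val := by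
      conv_lhs => rw [← Finset.sdiff_union_inter Y X]
      rw [Finset.sum_union (Finset.disjoint_sdiff_inter Y X), hb, Finset.sum_singleton,
        Finset.inter_comm]
    have hmod : (∑ x ∈ X, x.val) % gamma n r = (∑ x ∈ Y, x.val) % gamma n r :=
      congrArg Fin.val hf
    rw [hXeq, hYeq] at hmod
    have h1 : a.val % gamma n r = b.val % gamma n r :=
      Nat.ModEq.add_right_cancel' _ hmod
    have h2 : a.val < gamma n r := lt_of_lt_of_le a.isLt hγ
    have h3 : b.val < gamma n r := lt_of_lt_of_le b.isLt hγ
    rw [Nat.mod_eq_of_lt h2, Nat.mod_eq_of_lt h3] at h1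
    exact hab (Fin.ext h1)
end
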